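/- The language L_eq\bar{eq} = { a·w : w ∈ L_eq } ∪ { b·w : w ∈ {a,b}* and w ∉ L_eq } over the alphabet {a,b} belongs to PostS. -/

import Mathlib

noncomputable section

/-- The input alphabet extended with the two endmarkers `¢` and `$`. -/
inductive ESym (α : Type) : Type where
  | cent : ESym α
  | dollar : ESym α
  | letter : α → ESym α

/-- The state distribution obtained by applying, in order, the matrices for
`¢`, the letters of `w`, and `$` to the standard basis vector at the initial state `0`. -/
def pRun {α : Type} {n : ℕ} (A : ESym α → Matrix (Fin (n + 1)) (Fin (n + 1)) ℝ)
    (w : List α) : Fin (n + 1) → ℝ :=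
  (ESym.cent :: (w.map ESym.letter ++ [ESym.dollar])).foldl
    (fun v σ => (A σ).mulVec v) (Pi.single 0 1)

/-- A real-time probabilistic finite automaton with postselection (RT-PostPFA). -/
structure PostPFA (α : Type) where
  n : ℕ
  A : ESym α → Matrix (Fin (n + 1)) (Fin (n + 1)) ℝ
  nonneg : ∀ σ i j, 0 ≤ A σ i j
  colSum : ∀ σ j, ∑ i, A σ i j = 1
  Qpa : Finset (Fin (n + 1))
  Qpr : Finset (Fin (n + 1))
  disj : Disjoint Qpa Qpr
  postPos : ∀ w : List α,
    0 < (∑ i ∈ Qpa, pRun A w i) + (∑ i ∈ Qpr, pRun A w i)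

/-- Acceptance probability before postselection. -/
def PostPFA.pacc {α : Type} (M : PostPFA α) (w : List α) : ℝ :=
  ∑ i ∈ M.Qpa, pRun M.A w i

/-- Rejection probability before postselection. -/
def PostPFA.prej {α : Type} (M : PostPFA α) (w : List α) : ℝ :=
  ∑ i ∈ M.Qpr, pRun M.A w i

/-- Normalized acceptance probability of an RT-PostPFA. -/
def PostPFA.fa {α : Type} (M : PostPFA α) (w : List α) : ℝ :=
  M.pacc w / (M.pacc w + M.prej w)

/-- Recognition of a language with error bound `ε`. -/
def PostPFA.Recognizes {α : Type} (M : PostPFA α) (L : Set (List α)) (ε : ℝ) : Prop :=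
  ∀ w : List α, (w ∈ L → 1 - ε ≤ M.fa w) ∧ (w ∉ L → M.fa w ≤ ε)

/-- The class of languages recognized by RT-PostPFAs with bounded error. -/
def PostS {α : Type} (L : Set (List α)) : Prop :=
  ∃ (M : PostPFA α) (ε : ℝ), 0 ≤ ε ∧ ε < 1 / 2 ∧ M.Recognizes L ε

/-- Recognition with zero error: `fa = 1` on members, `fa = 0` on non-members. -/
def PostPFA.RecognizesZero {α : Type} (M : PostPFA α) (L : Set (List α)) : Prop :=
  ∀ w : List α, (w ∈ L → M.fa w = 1) ∧ (w ∉ L → M.fa w = 0)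

/-- The class of languages recognized by RT-PostPFAs with zero error. -/
def ZPostS {α : Type} (L : Set (List α)) : Prop :=
  ∃ M : PostPFA α, M.RecognizesZero L

/-- The two-letter alphabet `{a, b}`. -/
inductive TwoSym : Type where
  | a : TwoSym
  | b : TwoSym
deriving DecidableEq

instance : Fintype TwoSym where
  elems := {TwoSym.a, TwoSym.b}
  complete := by intro x; cases x <;> simp

/-- The language of words with equally many `a`s and `b`s. -/
def Leq : Set (List TwoSym) := {w | w.count TwoSym.a = w.count TwoSym.b}

/-- The language of palindromes over `{a, b}`. -/
def Lpal : Set (List TwoSym) := {w | w.reverse = w}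

/-- The language `L_eq\bar{eq} = a·L_eq ∪ b·(complement of L_eq)`. -/
def Leqeq : Set (List TwoSym) :=
  {w | ∃ u : List TwoSym,
    (w = TwoSym.a :: u ∧ u ∈ Leq) ∨ (w = TwoSym.b :: u ∧ u ∉ Leq)}

/-!
The first letter sends masses `1/8, 1/8, 3/8` to three tracks (states `1, 2, 3` after `a`,
states `4, 5, 6` after `b`; the rest goes to a sink). Every later letter multiplies the mass on
the first track by `4 ^ (±1) / 8`, on the second by `4 ^ (∓1) / 8` and on the third by `1 / 8`,
so after `c · u` the three tracks hold `4 ^ d`, `4 ^ (-d)` and `3` times `8 ^ (-(|u| + 1))`,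
where `d = #a - #b`. After `a` the third track accepts and the other two reject, after `b` the
other way round; with `s = 4 ^ d + 4 ^ (-d)` this gives `f^a(a · u) = 3 / (3 + s)` and
`f^a(b · u) = s / (s + 3)`. Now `s = 2` when `d = 0` and `s ≥ 4 + 1 / 4` otherwise, so the
error bound `12 / 29 = 3 / (3 + 17 / 4)` separates the two cases.
-/

lemma PostPFA.fa_eq_of_eq_mul {α : Type} (M : PostPFA α) (w : List α) {q x y : ℝ}
    (hq : q ≠ 0) (hx : M.pacc w = x * q) (hy : M.prej w = y * q) : M.fa w = x / (x + y) := by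
  rw [PostPFA.fa, hx, hy, ← add_mul, mul_div_mul_right _ _ hq]

open Matrix

section TrackMatrix

variable {n : ℕ}

/-- Column `0` is the distribution `p`; every other state `j` keeps the fraction `r j` of its
mass and sends the rest to the sink `Fin.last n`. -/
def trackMatrix (p r : Fin (n + 1) → ℝ) : Matrix (Fin (n + 1)) (Fin (n + 1)) ℝ :=
  Matrix.of fun i j =>
    if j = 0 then p i else if i = j then r j else if i = Fin.last n then 1 - r j else 0

lemma trackMatrix_nonneg {p r : Fin (n + 1) → ℝ} (hp : 0 ≤ p) (hr : 0 ≤ r) (hr1 : r ≤ 1)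
    (i j : Fin (n + 1)) : 0 ≤ trackMatrix p r i j := by
  simp only [trackMatrix, Matrix.of_apply]
  split_ifs
  exacts [hp i, hr j, sub_nonneg.2 (hr1 j), le_rfl]

lemma trackMatrix_colSum {p r : Fin (n + 1) → ℝ} (hp : ∑ i, p i = 1) (hr : r (Fin.last n) = 1)
    (j : Fin (n + 1)) : ∑ i, trackMatrix p r i j = 1 := by
  simp only [trackMatrix, Matrix.of_apply]
  by_cases hj0 : j = 0
  · simpa [hj0] using hp
  by_cases hjl : j = Fin.last n
  · subst hjl
    simp [hj0, hr]
  rw [Fintype.sum_eq_add j (Fin.last n) hjl]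
  · simp [hj0, Ne.symm hjl]
  · rintro i ⟨hij, hil⟩
    simp [hj0, hij, hil]

lemma trackMatrix_mulVec_single_zero (p r : Fin (n + 1) → ℝ) :
    trackMatrix p r *ᵥ Pi.single 0 1 = p := by
  ext i
  simp [trackMatrix]

lemma trackMatrix_mulVec_apply (p r : Fin (n + 1) → ℝ) {v : Fin (n + 1) → ℝ} (hv : v 0 = 0)
    {i : Fin (n + 1)} (hi : i ≠ Fin.last n) : (trackMatrix p r *ᵥ v) i = r i * v i := by
  rw [Matrix.mulVec, dotProduct, Finset.sum_eq_single i]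
  · by_cases hi0 : i = 0
    · simp [trackMatrix, hi0, hv]
    · simp [trackMatrix, hi0]
  · intro j _ hji
    by_cases hj0 : j = 0
    · simp [hj0, hv]
    · simp [trackMatrix, hj0, Ne.symm hji, hi]
  · simp

lemma foldl_trackMatrix_apply {α : Type*} (p r : α → Fin (n + 1) → ℝ) (u : List α)
    {v : Fin (n + 1) → ℝ} (hv : v 0 = 0) {i : Fin (n + 1)} (hi : i ≠ Fin.last n) :
    (u.foldl (fun v c => trackMatrix (p c) (r c) *ᵥ v) v) i = (u.map (r · i)).prod * v i := by
  have h0 : (0 : Fin (n + 1)) ≠ Fin.last n := by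
    rintro h
    exact hi (by ext; have := i.isLt; simp [Fin.ext_iff] at h; omega)
  induction u generalizing v with
  | nil => simp
  | cons c u ih =>
    rw [List.foldl_cons, ih (by rw [trackMatrix_mulVec_apply _ _ hv h0, hv, mul_zero]),
      trackMatrix_mulVec_apply _ _ hv hi, List.map_cons, List.prod_cons]
    ring

end TrackMatrix

namespace Leqeq

def letterSign : TwoSym → ℤ
  | .a => 1
  | .b => -1

def balance (u : List TwoSym) : ℤ := (u.map letterSign).sum

lemma balance_cons (c : TwoSym) (u : List TwoSym) : balance (c :: u) = letterSign c + balance u :=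
  List.sum_cons

lemma balance_eq_count_sub_count (u : List TwoSym) :
    balance u = u.count .a - u.count .b := by
  induction u with
  | nil => rfl
  | cons c u ih =>
    rw [balance_cons, ih]
    cases c <;> simp [letterSign] <;> ring

lemma balance_eq_zero_iff (u : List TwoSym) : balance u = 0 ↔ u ∈ Leq := by
  rw [balance_eq_count_sub_count, sub_eq_zero, Nat.cast_inj]
  rfl

def trackExp : Fin 8 → ℤ := ![0, 1, -1, 0, 1, -1, 0, 0]

def entry : ESym TwoSym → Fin 8 → ℝ
  | .cent => Pi.single 0 1
  | .dollar => Pi.single 6 1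
  | .letter .a => ![0, 1/8, 1/8, 3/8, 0, 0, 0, 3/8]
  | .letter .b => ![0, 0, 0, 0, 1/8, 1/8, 3/8, 3/8]

def rate : ESym TwoSym → Fin 8 → ℝ
  | .letter c => fun i => if i = 7 then 1 else 4 ^ (trackExp i * letterSign c) / 8
  | _ => 1

def transitions (σ : ESym TwoSym) : Matrix (Fin 8) (Fin 8) ℝ := trackMatrix (entry σ) (rate σ)

lemma entry_nonneg (σ : ESym TwoSym) : 0 ≤ entry σ := by
  intro i
  rcases σ with _ | _ | _ | _ <;> fin_cases i <;> simp [entry] <;> norm_num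

lemma sum_entry (σ : ESym TwoSym) : ∑ i, entry σ i = 1 := by
  rcases σ with _ | _ | _ | _ <;> simp [entry, Fin.sum_univ_eight] <;> norm_num

lemma rate_nonneg (σ : ESym TwoSym) : 0 ≤ rate σ := by
  intro i
  rcases σ with _ | _ | c
  · exact zero_le_one
  · exact zero_le_one
  · simp only [rate]
    split_ifs <;> positivity

lemma rate_le_one (σ : ESym TwoSym) : rate σ ≤ 1 := by
  intro i
  rcases σ with _ | _ | c
  · exact le_rfl
  · exact le_rfl
  simp only [rate, Pi.one_apply]
  split_ifs
  · exact le_rfl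
  have : trackExp i * letterSign c ≤ 1 := by
    fin_cases i <;> cases c <;> decide
  calc (4 : ℝ) ^ (trackExp i * letterSign c) / 8 ≤ 4 ^ (1 : ℤ) / 8 := by
        gcongr
        norm_num
    _ ≤ 1 := by norm_num

lemma rate_last (σ : ESym TwoSym) : rate σ (Fin.last 7) = 1 := by
  rcases σ with _ | _ | c <;> rfl

lemma prod_map_rate (u : List TwoSym) {i : Fin 8} (hi : i ≠ 7) :
    (u.map fun c => rate (.letter c) i).prod = 4 ^ (trackExp i * balance u) / 8 ^ u.length := by
  induction u with
  | nil => simp [balance]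
  | cons c u ih =>
    rw [List.map_cons, List.prod_cons, ih, balance_cons, mul_add, zpow_add₀ (by norm_num),
      List.length_cons, pow_succ]
    simp only [rate, hi, if_false]
    ring

lemma entry_letter_zero (c : TwoSym) : entry (.letter c) 0 = 0 := by
  cases c <;> rfl

lemma transitions_mulVec_start (σ : ESym TwoSym) :
    transitions σ *ᵥ (transitions .cent *ᵥ Pi.single 0 1) = entry σ := by
  rw [transitions, transitions, trackMatrix_mulVec_single_zero]
  exact trackMatrix_mulVec_single_zero _ _

lemma pRun_nil : pRun transitions [] = Pi.single 6 1 :=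
  transitions_mulVec_start .dollar

lemma pRun_cons_apply (c : TwoSym) (u : List TwoSym) {i : Fin 8} (hi : i ≠ 7) :
    pRun transitions (c :: u) i =
      entry (.letter c) i * 4 ^ (trackExp i * balance u) / 8 ^ u.length := by
  simp only [pRun, List.map_cons, List.cons_append, List.foldl_cons, List.foldl_append,
    List.foldl_map, List.foldl_nil]
  rw [transitions_mulVec_start]
  have hfold {j : Fin 8} (hj : j ≠ 7) :
      (u.foldl (fun v d => transitions (.letter d) *ᵥ v) (entry (.letter c))) j =
        (u.map fun d => rate (.letter d) j).prod * entry (.letter c) j :=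
    foldl_trackMatrix_apply _ _ u (entry_letter_zero c) hj
  have hstart :
      (u.foldl (fun v d => transitions (.letter d) *ᵥ v) (entry (.letter c))) 0 = 0 := by
    rw [hfold (by decide), entry_letter_zero, mul_zero]
  rw [transitions, trackMatrix_mulVec_apply _ _ hstart hi, hfold hi, prod_map_rate u hi]
  simp only [rate, Pi.one_apply]
  ring

lemma sum_pRun_cons (c : TwoSym) (u : List TwoSym) {s : Finset (Fin 8)} (hs : 7 ∉ s) :
    ∑ i ∈ s, pRun transitions (c :: u) i =
      (∑ i ∈ s, entry (.letter c) i * 4 ^ (trackExp i * balance u)) / 8 ^ u.length := by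
  rw [Finset.sum_div]
  refine Finset.sum_congr rfl fun i hi => pRun_cons_apply c u ?_
  rintro rfl
  exact hs hi

def machine : PostPFA TwoSym where
  n := 7
  A := transitions
  nonneg σ := trackMatrix_nonneg (entry_nonneg σ) (rate_nonneg σ) (rate_le_one σ)
  colSum σ := trackMatrix_colSum (sum_entry σ) (rate_last σ)
  Qpa := {3, 4, 5}
  Qpr := {1, 2, 6}
  disj := by decide
  postPos w := by
    rcases w with _ | ⟨c, u⟩
    · simp [pRun_nil]
    · rw [sum_pRun_cons c u (by decide), sum_pRun_cons c u (by decide)]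
      cases c <;> simp [entry, trackExp] <;> positivity

def symPow (d : ℤ) : ℝ := 4 ^ d + 4 ^ (-d)

lemma symPow_zero : symPow 0 = 2 := by norm_num [symPow]

lemma le_symPow {d : ℤ} (hd : d ≠ 0) : 17 / 4 ≤ symPow d := by
  have ht : 0 < (4 : ℝ) ^ d := by positivity
  have hfar : 4 ≤ (4 : ℝ) ^ d ∨ (4 : ℝ) ^ d ≤ 4⁻¹ := by
    rcases lt_or_gt_of_ne hd with hd | hd
    · right
      calc (4 : ℝ) ^ d ≤ 4 ^ (-1 : ℤ) := zpow_le_zpow_right₀ (by norm_num) (by omega)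
        _ = 4⁻¹ := zpow_neg_one _
    · left
      calc (4 : ℝ) = 4 ^ (1 : ℤ) := (zpow_one _).symm
        _ ≤ 4 ^ d := zpow_le_zpow_right₀ (by norm_num) (by omega)
  have hprod : 0 ≤ ((4 : ℝ) ^ d - 4) * (4 ^ d - 4⁻¹) := by
    rcases hfar with h | h <;> nlinarith
  have hdiff : symPow d - 17 / 4 = ((4 : ℝ) ^ d - 4) * (4 ^ d - 4⁻¹) / 4 ^ d := by
    rw [symPow, _root_.zpow_neg]
    field_simp
    ring
  linarith [div_nonneg hprod ht.le]

lemma fa_nil : machine.fa [] = 0 := by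
  simp [PostPFA.fa, PostPFA.pacc, machine, pRun_nil]

lemma fa_cons_a (u : List TwoSym) : machine.fa (.a :: u) = 3 / (3 + symPow (balance u)) := by
  refine machine.fa_eq_of_eq_mul _ (q := (8 ^ (u.length + 1))⁻¹) (by positivity) ?_ ?_ <;>
    simp only [PostPFA.pacc, PostPFA.prej, machine] <;>
    rw [sum_pRun_cons _ u (by decide)] <;>
    simp [entry, trackExp, symPow, pow_succ] <;> ring

lemma fa_cons_b (u : List TwoSym) :
    machine.fa (.b :: u) = symPow (balance u) / (symPow (balance u) + 3) := by
  refine machine.fa_eq_of_eq_mul _ (q := (8 ^ (u.length + 1))⁻¹) (by positivity) ?_ ?_ <;>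
    simp only [PostPFA.pacc, PostPFA.prej, machine] <;>
    rw [sum_pRun_cons _ u (by decide)] <;>
    simp [entry, trackExp, symPow, pow_succ] <;> ring

lemma nil_notMem : [] ∉ Leqeq := by
  simp [Leqeq]

lemma cons_a_mem_iff (u : List TwoSym) : .a :: u ∈ Leqeq ↔ u ∈ Leq := by
  simp [Leqeq]

lemma cons_b_mem_iff (u : List TwoSym) : .b :: u ∈ Leqeq ↔ u ∉ Leq := by
  simp [Leqeq]

end Leqeq

open Leqeq

/-- `L_eq\bar{eq}` belongs to `PostS`. -/
theorem Leqeq_mem_PostS : PostS Leqeq := by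
  refine ⟨machine, 12 / 29, by norm_num, by norm_num, ?_⟩
  rintro (_ | ⟨_ | _, u⟩)
  · norm_num [nil_notMem, fa_nil]
  · rw [cons_a_mem_iff, fa_cons_a, ← balance_eq_zero_iff]
    refine ⟨fun h => ?_, fun h => ?_⟩
    · rw [h, symPow_zero]
      norm_num
    · have := le_symPow h
      rw [div_le_iff₀ (by linarith)]
      linarith
  · rw [cons_b_mem_iff, fa_cons_b, ← balance_eq_zero_iff]
    refine ⟨fun h => ?_, fun h => ?_⟩
    · have := le_symPow h
      rw [le_div_iff₀ (by linarith)]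
      linarith
    · rw [not_not.1 h, symPow_zero]
      norm_num
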